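/- arXiv:2410.14811 — 4 statements merged into one kernel-verified Lean document; each statement's English description precedes it below -/
import Mathlib

section
/- Let β > 0 and D ∈ ℝ, and let C ⊆ E be a nonempty closed convex set. Then C is β-smooth and satisfies diam(C) ≤ D if and only if there exists a nonempty closed convex set C₀ ⊆ E with diam(C₀) ≤ D − 2/β such that C = C₀ + closedBall(0, 1/β) (Minkowski sum). -/
open Metric Set
open scoped RealInnerProductSpace Pointwise

noncomputable section

variable {F : Type*} [NormedAddCommGroup F] [InnerProductSpace ℝ F]

/-- The normal cone of a set `C` at a point `z`. -/
def normalCone (C : Set F) (z : F) : Set F :=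
  {v | ∀ x ∈ C, ⟪v, x - z⟫ ≤ 0}

/-- A set `C` is `β`-smooth if at every boundary point `z`, every unit normal vector `n`
gives a closed ball of radius `1/β` centered at `z - (1/β) n` contained in `C`. -/
def IsSmoothSet (β : ℝ) (C : Set F) : Prop :=
  ∀ z ∈ frontier C, ∀ n ∈ normalCone C z, ‖n‖ = 1 →
    closedBall (z - (1 / β) • n) (1 / β) ⊆ C

/-- `diam C ≤ D`, expressed pointwise. -/
def DiamLE (C : Set F) (D : ℝ) : Prop :=
  ∀ x ∈ C, ∀ y ∈ C, ‖x - y‖ ≤ D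

/-!
Write `r = 1 / β` and take for `C₀` the inner parallel body `{x | closedBall x r ⊆ C}`: it is
closed and convex as an intersection of translates of `C`, and `C₀ + closedBall 0 r ⊆ C`.
Smoothness gives the reverse inclusion: for `x ∈ C` the largest ball around `x` inside `C` touches
the frontier at a point `z` with a unit normal `n` (supporting hyperplane), and there it is
internally tangent to the ball `closedBall (z - r • n) r ⊆ C`, whose centre lies in `C₀`. It is
nonempty because the projection of a point outside the bounded set `C` yields a frontier point
with a unit normal. Conversely, at a frontier point `a + b` of `C₀ + closedBall 0 r` a unit normal
`n` forces `b = r • n`, so the smoothness ball is `closedBall a r`. For the diameters, two points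
of `C₀` stay in `C` when pushed apart by `r` along their difference.
-/

section NormedGroup

variable {E : Type*} [NormedAddCommGroup E]

lemma closedBall_subset_add_closedBall_zero {A : Set E} {a : E} (ha : a ∈ A) (r : ℝ) :
    closedBall a r ⊆ A + closedBall 0 r :=
  singleton_add_closedBall_zero r a ▸ add_subset_add_right (singleton_subset_iff.2 ha)

def innerParallelBody (C : Set E) (r : ℝ) : Set E :=
  {x | closedBall x r ⊆ C}

lemma innerParallelBody_eq_iInter (C : Set E) (r : ℝ) :
    innerParallelBody C r = ⋂ b ∈ closedBall (0 : E) r, (· + b) ⁻¹' C := by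
  ext x
  simp only [mem_iInter, mem_preimage]
  change closedBall x r ⊆ C ↔ _
  rw [← singleton_add_closedBall_zero r x, singleton_add, image_subset_iff]
  rfl

lemma IsClosed.innerParallelBody {C : Set E} (hC : IsClosed C) (r : ℝ) :
    IsClosed (innerParallelBody C r) := by
  rw [innerParallelBody_eq_iInter]
  exact isClosed_biInter fun b _ => hC.preimage (continuous_add_const b)

lemma Convex.innerParallelBody [NormedSpace ℝ E] {C : Set E} (hC : Convex ℝ C) (r : ℝ) :
    Convex ℝ (innerParallelBody C r) := by
  rw [innerParallelBody_eq_iInter]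
  exact convex_iInter₂ fun b _ => hC.translate_preimage_left b

lemma innerParallelBody_add_closedBall_subset (C : Set E) (r : ℝ) :
    innerParallelBody C r + closedBall 0 r ⊆ C := by
  rintro _ ⟨a, ha, b, hb, rfl⟩
  exact ha (by simpa using hb)

lemma DiamLE.isBounded {C : Set E} {D : ℝ} (hC : DiamLE C D) : Bornology.IsBounded C :=
  isBounded_iff.2 ⟨D, fun x hx y hy => by simpa only [dist_eq_norm] using hC x hx y hy⟩

lemma DiamLE.add_closedBall {C : Set E} {D : ℝ} (hC : DiamLE C D) (r : ℝ) :
    DiamLE (C + closedBall 0 r) (D + 2 * r) := by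
  rintro _ ⟨a, ha, b, hb, rfl⟩ _ ⟨a', ha', b', hb', rfl⟩
  rw [mem_closedBall_zero_iff] at hb hb'
  calc ‖a + b - (a' + b')‖ = ‖(a - a') + (b - b')‖ := by rw [add_sub_add_comm]
    _ ≤ ‖a - a'‖ + (‖b‖ + ‖b'‖) := (norm_add_le _ _).trans (by gcongr; exact norm_sub_le b b')
    _ ≤ D + 2 * r := by linarith [hC a ha a' ha']

end NormedGroup

lemma smul_mem_normalCone {C : Set F} {z v : F} {c : ℝ} (hc : 0 ≤ c)
    (hv : v ∈ normalCone C z) : c • v ∈ normalCone C z := fun x hx => by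
  rw [real_inner_smul_left]
  exact mul_nonpos_of_nonneg_of_nonpos hc (hv x hx)

lemma exists_unit_mem_normalCone {C : Set F} {z v : F} (hv : v ∈ normalCone C z) (hv0 : v ≠ 0) :
    ∃ n ∈ normalCone C z, ‖n‖ = 1 :=
  ⟨‖v‖⁻¹ • v, smul_mem_normalCone (by positivity) hv, norm_smul_inv_norm hv0⟩

/-- At an interior point `z`, the functional `⟪n, ·⟫` would have a local maximum, so its
derivative `n` would vanish. -/
lemma mem_frontier_of_mem_normalCone {C : Set F} {z n : F} (hz : z ∈ C)
    (hn : n ∈ normalCone C z) (hn0 : n ≠ 0) : z ∈ frontier C := by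
  refine ⟨subset_closure hz, fun hint => hn0 ?_⟩
  have hmax : IsLocalMax (fun x => ⟪n, x⟫) z :=
    Filter.mem_of_superset (mem_interior_iff_mem_nhds.1 hint) fun x hx => by
      simpa [inner_sub_right] using hn x hx
  have h0 := hmax.hasFDerivAt_eq_zero ((innerSL ℝ n).hasFDerivAt)
  simpa using congrArg (fun f => f n) h0

lemma exists_unit_normal_of_notMem [CompleteSpace F] {C : Set F} (hne : C.Nonempty)
    (hcl : IsClosed C) (hcv : Convex ℝ C) {u : F} (hu : u ∉ C) :
    ∃ z ∈ frontier C, ∃ n ∈ normalCone C z, ‖n‖ = 1 := by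
  obtain ⟨z, hzC, hz⟩ := exists_norm_eq_iInf_of_complete_convex hne hcl.isComplete hcv u
  have hnormal : u - z ∈ normalCone C z :=
    (norm_eq_iInf_iff_real_inner_le_zero hcv hzC).1 hz
  have huz : u - z ≠ 0 := sub_ne_zero.2 fun h => hu (h ▸ hzC)
  exact ⟨z, mem_frontier_of_mem_normalCone hzC hnormal huz, exists_unit_mem_normalCone hnormal huz⟩

lemma exists_unit_normal_of_mem_frontier [CompleteSpace F] {C : Set F} (hcv : Convex ℝ C)
    (hint : (interior C).Nonempty) {z : F} (hz : z ∈ frontier C) :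
    ∃ n ∈ normalCone C z, ‖n‖ = 1 := by
  obtain ⟨f, hf⟩ := geometric_hahn_banach_open_point hcv.interior isOpen_interior hz.2
  have hle : C ⊆ {y | f y ≤ f z} :=
    calc C ⊆ closure (interior C) := hcv.closure_interior_eq_closure_of_nonempty_interior hint ▸
          subset_closure
      _ ⊆ {y | f y ≤ f z} := closure_minimal (fun y hy => (hf y hy).le)
          (isClosed_le f.continuous continuous_const)
  set v := (InnerProductSpace.toDual ℝ F).symm f
  have hv : ∀ x, ⟪v, x⟫ = f x := fun x => InnerProductSpace.toDual_symm_apply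
  refine exists_unit_mem_normalCone (v := v) (fun y hy => ?_) fun h0 => ?_
  · rw [inner_sub_right, hv, hv]
    exact sub_nonpos.2 (hle hy)
  · obtain ⟨a, ha⟩ := hint
    simpa [← hv, h0] using hf a ha

lemma eq_smul_of_norm_le_of_le_inner {n v : F} {r : ℝ} (hn : ‖n‖ = 1) (hv : ‖v‖ ≤ r)
    (hr : r ≤ ⟪n, v⟫) : v = r • n := by
  have hinner : ⟪n, v⟫ ≤ ‖v‖ := by simpa [hn] using real_inner_le_norm n v
  have hvr : ‖v‖ = r := by linarith
  have := inner_eq_norm_mul_iff_real.1 (show ⟪n, v⟫ = ‖n‖ * ‖v‖ by rw [hn]; linarith)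
  rwa [hn, one_smul, hvr, eq_comm] at this

lemma eq_sub_smul_of_closedBall_subset {C : Set F} {x z n : F} {t : ℝ}
    (hxt : closedBall x t ⊆ C) (hxz : dist x z = t) (hn : n ∈ normalCone C z) (hn1 : ‖n‖ = 1) :
    x = z - t • n := by
  have ht : 0 ≤ t := hxz ▸ dist_nonneg
  have hle : t ≤ ⟪n, z - x⟫ := by
    have := hn (x + t • n) (hxt (by simp [norm_smul, hn1, abs_of_nonneg ht]))
    rw [show x + t • n - z = t • n - (z - x) by abel, inner_sub_right, real_inner_smul_right,
      real_inner_self_eq_norm_sq, hn1] at this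
    linarith
  have := eq_smul_of_norm_le_of_le_inner hn1 (by rw [← dist_eq_norm, dist_comm, hxz]) hle
  rw [← this, sub_sub_cancel]

lemma exists_unit_inner_eq_norm [Nontrivial F] (v : F) : ∃ u : F, ‖u‖ = 1 ∧ ⟪u, v⟫ = ‖v‖ := by
  rcases eq_or_ne v 0 with rfl | hv
  · simpa using exists_norm_eq F zero_le_one
  · refine ⟨‖v‖⁻¹ • v, norm_smul_inv_norm hv, ?_⟩
    rw [real_inner_smul_left, real_inner_self_eq_norm_sq]
    field_simp

lemma DiamLE.innerParallelBody [Nontrivial F] {C : Set F} {D r : ℝ} (hC : DiamLE C D)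
    (hr : 0 ≤ r) : DiamLE (innerParallelBody C r) (D - 2 * r) := by
  intro x hx y hy
  obtain ⟨u, hu, hux⟩ := exists_unit_inner_eq_norm (x - y)
  have hx' : x + r • u ∈ C := hx (by simp [norm_smul, hu, abs_of_nonneg hr])
  have hy' : y - r • u ∈ C := hy (by simp [norm_smul, hu, abs_of_nonneg hr])
  have key : ‖x - y‖ + 2 * r ≤ D :=
    calc ‖x - y‖ + 2 * r = ⟪u, (x + r • u) - (y - r • u)⟫ := by
          rw [show (x + r • u) - (y - r • u) = (x - y) + (2 * r) • u by module, inner_add_right,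
            real_inner_smul_right, real_inner_self_eq_norm_sq, hu, hux]
          ring
      _ ≤ ‖(x + r • u) - (y - r • u)‖ := by simpa [hu] using real_inner_le_norm u _
      _ ≤ D := hC _ hx' _ hy'
  linarith

lemma isSmoothSet_add_closedBall {A : Set F} {β : ℝ} (hβ : 0 < β)
    (hcl : IsClosed (A + closedBall 0 (1 / β))) : IsSmoothSet β (A + closedBall 0 (1 / β)) := by
  intro z hz n hn hn1
  obtain ⟨a, ha, b, hb, rfl⟩ := hcl.frontier_subset hz
  have hb_le : 1 / β ≤ ⟪n, b⟫ := by
    have := hn (a + (1 / β) • n) (add_mem_add ha (by simp [norm_smul, hn1, abs_of_pos hβ]))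
    rw [show a + (1 / β) • n - (a + b) = (1 / β) • n - b by abel, inner_sub_right,
      real_inner_smul_right, real_inner_self_eq_norm_sq, hn1] at this
    linarith
  rw [eq_smul_of_norm_le_of_le_inner hn1 (mem_closedBall_zero_iff.1 hb) hb_le,
    add_sub_cancel_right]
  exact closedBall_subset_add_closedBall_zero ha _

namespace IsSmoothSet

variable {β : ℝ} {C : Set F}

lemma innerParallelBody_nonempty [CompleteSpace F] (hsm : IsSmoothSet β C) (hne : C.Nonempty)
    (hcl : IsClosed C) (hcv : Convex ℝ C) (hC : C ≠ univ) :
    (innerParallelBody C (1 / β)).Nonempty := by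
  obtain ⟨u, hu⟩ := ne_univ_iff_exists_notMem C |>.1 hC
  obtain ⟨z, hz, n, hn, hn1⟩ := exists_unit_normal_of_notMem hne hcl hcv hu
  exact ⟨_, hsm z hz n hn hn1⟩

/-- If the `r`-ball around `x ∈ C` leaves `C`, the largest ball around `x` inside `C` touches the
frontier at some `z`, where it is internally tangent to the `r`-ball that smoothness provides. -/
lemma subset_innerParallelBody_add_closedBall [ProperSpace F] (hβ : 0 < β)
    (hsm : IsSmoothSet β C) (hcl : IsClosed C) (hcv : Convex ℝ C)
    (hC₀ : (innerParallelBody C (1 / β)).Nonempty) :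
    C ⊆ innerParallelBody C (1 / β) + closedBall 0 (1 / β) := by
  set r := 1 / β
  have hr : 0 < r := by positivity
  intro x hx
  by_cases hball : closedBall x r ⊆ C
  · exact closedBall_subset_add_closedBall_zero hball r (mem_closedBall_self hr.le)
  obtain ⟨p, hpr, hpC⟩ := not_subset.1 hball
  set t := infDist x Cᶜ
  have htr : t ≤ r := (infDist_le_dist_of_mem hpC).trans (mem_closedBall'.1 hpr)
  have hxt : closedBall x t ⊆ C := hcl.closure_eq ▸ closedBall_infDist_compl_subset_closure hx
  obtain ⟨z, hzCc, hxz⟩ :=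
    isClosed_closure.exists_infDist_eq_dist ⟨p, subset_closure (s := Cᶜ) hpC⟩ x
  rw [infDist_closure] at hxz
  have hz : z ∈ frontier C := by
    rw [frontier_eq_closure_inter_closure]
    exact ⟨subset_closure (hxt (mem_closedBall'.2 hxz.ge)), hzCc⟩
  have hint : (interior C).Nonempty := by
    obtain ⟨c, hc⟩ := hC₀
    exact ⟨c, interior_mono hc (isOpen_ball.subset_interior_iff.2 ball_subset_closedBall
      (mem_ball_self hr))⟩
  obtain ⟨n, hn, hn1⟩ := exists_unit_normal_of_mem_frontier hcv hint hz
  refine closedBall_subset_add_closedBall_zero (hsm z hz n hn hn1) r ?_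
  rw [eq_sub_smul_of_closedBall_subset hxt hxz.symm hn hn1, mem_closedBall, dist_eq_norm,
    show z - t • n - (z - r • n) = (r - t) • n by module, norm_smul, hn1, mul_one,
    Real.norm_of_nonneg (by linarith)]
  linarith [infDist_nonneg (x := x) (s := Cᶜ)]

end IsSmoothSet

/-- A nonempty closed convex set `C` is `β`-smooth with `diam C ≤ D` iff it is the
Minkowski sum of a nonempty closed convex set of diameter at most `D - 2/β` and a
closed ball of radius `1/β`. -/
theorem smooth_and_diam_iff_minkowski {d : ℕ} (hd : 1 ≤ d) (β D : ℝ) (hβ : 0 < β)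
    (C : Set (EuclideanSpace ℝ (Fin d))) (hne : C.Nonempty) (hcl : IsClosed C)
    (hcv : Convex ℝ C) :
    (IsSmoothSet β C ∧ DiamLE C D) ↔
      ∃ C₀ : Set (EuclideanSpace ℝ (Fin d)), C₀.Nonempty ∧ IsClosed C₀ ∧ Convex ℝ C₀ ∧
        DiamLE C₀ (D - 2 / β) ∧ C = C₀ + closedBall 0 (1 / β) := by
  have : Nonempty (Fin d) := ⟨⟨0, hd⟩⟩
  have h2β : 2 / β = 2 * (1 / β) := by ring
  constructor
  · rintro ⟨hsm, hdiam⟩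
    have hC₀ : (innerParallelBody C (1 / β)).Nonempty :=
      hsm.innerParallelBody_nonempty hne hcl hcv
        fun h => NormedSpace.unbounded_univ ℝ _ (h ▸ hdiam.isBounded)
    refine ⟨_, hC₀, hcl.innerParallelBody _, hcv.innerParallelBody _,
      h2β ▸ hdiam.innerParallelBody (by positivity), ?_⟩
    exact (hsm.subset_innerParallelBody_add_closedBall hβ hcl hcv hC₀).antisymm
      (innerParallelBody_add_closedBall_subset C _)
  · rintro ⟨C₀, -, -, -, hdiam, rfl⟩
    refine ⟨isSmoothSet_add_closedBall hβ hcl, ?_⟩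
    simpa [h2β] using hdiam.add_closedBall (1 / β)
end
end

section
/- Let D ≥ 0 and let (z_i, v_i)_{i∈I}, (x_k, δ_k)_{k∈K} be interpolation data in E, with n_i = v_i/‖v_i‖. There exists a nonempty closed convex set C ⊆ E with diam(C) ≤ D that interpolates the data (that is, z_i ∈ C and v_i ∈ N_C(z_i) for all i ∈ I, and x_k ∈ int_{δ_k} C for all k ∈ K) if and only if for all i, j ∈ I and all k, l ∈ K: ⟪n_i, z_j − z_i⟫ ≤ 0; ⟪n_i, x_k + δ_k·n_i − z_i⟫ ≤ 0; ‖x_k − x_l‖ ≤ D − δ_k − δ_l; ‖z_i − x_k‖ ≤ D − δ_k; and ‖z_i − z_j‖ ≤ D. -/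
open Metric Set
open scoped RealInnerProductSpace Pointwise

noncomputable section

variable {F : Type*} [NormedAddCommGroup F] [InnerProductSpace ℝ F]

/-- A set `C` is `α`-strongly convex if at every boundary point `z`, every unit normal
vector `n` gives a closed ball of radius `1/α` centered at `z - (1/α) n` containing `C`. -/
def IsStronglyConvexSet (α : ℝ) (C : Set F) : Prop :=
  ∀ z ∈ frontier C, ∀ n ∈ normalCone C z, ‖n‖ = 1 →
    C ⊆ closedBall (z - (1 / α) • n) (1 / α)

/-- The `δ`-interior of a set: points whose closed `δ`-ball lies inside the set. -/
def deltaInterior (δ : ℝ) (C : Set F) : Set F :=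
  {x | closedBall x δ ⊆ C}

/-- The set `C` interpolates the data: `z i ∈ C` with normal vector `v i`, and
`x k` lies in the `δ k`-interior of `C`. -/
def InterpolatedBy {ι κ : Type*} (C : Set F) (z v : ι → F) (x : κ → F) (δ : κ → ℝ) : Prop :=
  (∀ i, z i ∈ C ∧ v i ∈ normalCone C (z i)) ∧ ∀ k, x k ∈ deltaInterior (δ k) C

/-- The interpolation conditions `Interp(α, β, D; λ)`, with `n i = v i / ‖v i‖`,
`r = 1/α - 1/β` and `s k = max 0 (δ k - 1/β)`. -/
def InterpCond {ι κ : Type*} (α β D lam : ℝ) (z v : ι → F) (x : κ → F) (δ : κ → ℝ) : Prop :=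
  ∃ w : κ → F,
    (∀ i j, ‖z i - (1 / α) • (‖v i‖⁻¹ • v i) - (z j - (1 / β) • (‖v j‖⁻¹ • v j))‖ ≤
      1 / α - 1 / β) ∧
    (∀ i k, ‖z i - (1 / α) • (‖v i‖⁻¹ • v i) - w k‖ ≤
      (1 / α - 1 / β) - max 0 (δ k - 1 / β)) ∧
    (∀ k, ‖x k - w k‖ ≤ 1 / β - δ k + max 0 (δ k - 1 / β)) ∧
    (∀ i j, ‖z i - (1 / β) • (‖v i‖⁻¹ • v i) - (z j - (1 / β) • (‖v j‖⁻¹ • v j))‖ ≤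
      lam * (D - 2 / β)) ∧
    (∀ i k, ‖z i - (1 / β) • (‖v i‖⁻¹ • v i) - w k‖ ≤
      lam * (D - 2 / β) - max 0 (δ k - 1 / β)) ∧
    (∀ k l, ‖w k - w l‖ ≤ lam * (D - 2 / β) - max 0 (δ k - 1 / β) - max 0 (δ l - 1 / β))

/-!
Regard `z i` as the ball of radius `0` and `x k` as the ball of radius `δ k` and let `S` be the
union of these balls. A set interpolates the data iff it contains `S` and has `n i` in its normal
cone at `z i`. Passing from `S` to its closed convex hull changes neither the diameter bound nor
the normal cones, since both are expressed by inclusions of `S` in closed balls and closed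
half-spaces. So a solution exists iff `S` itself satisfies them, and for a union of balls both
reduce to conditions on centres and radii: two balls contain points at distance
`‖c - c'‖ + r + r'`, and a unit vector `n` is normal to `closedBall c r` at `z` iff
`⟪n, c + r • n - z⟫ ≤ 0`.
-/

lemma exists_norm_eq_one_sameRay {G : Type*} [NormedAddCommGroup G] [NormedSpace ℝ G]
    [Nontrivial G] (w : G) : ∃ u : G, ‖u‖ = 1 ∧ SameRay ℝ w u := by
  rcases eq_or_ne w 0 with rfl | hw
  · obtain ⟨u, hu⟩ := exists_norm_eq G zero_le_one
    exact ⟨u, hu, SameRay.zero_left u⟩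
  · exact ⟨‖w‖⁻¹ • w, norm_smul_inv_norm hw,
      SameRay.sameRay_nonneg_smul_right w (inv_nonneg.2 (norm_nonneg w))⟩

lemma exists_mem_closedBall_dist_add_le {G : Type*} [NormedAddCommGroup G] [NormedSpace ℝ G]
    [Nontrivial G] (p q : G) {s t : ℝ} (hs : 0 ≤ s) (ht : 0 ≤ t) :
    ∃ a ∈ closedBall p s, ∃ b ∈ closedBall q t, dist p q + s + t ≤ dist a b := by
  obtain ⟨u, hu, hray⟩ := exists_norm_eq_one_sameRay (p - q)
  refine ⟨p + s • u, by simp [norm_smul, hu, abs_of_nonneg hs],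
    q - t • u, by simp [norm_smul, hu, abs_of_nonneg ht], le_of_eq ?_⟩
  have hab : p + s • u - (q - t • u) = (p - q) + (s + t) • u := by module
  rw [dist_eq_norm, dist_eq_norm, hab, (hray.nonneg_smul_right (add_nonneg hs ht)).norm_add,
    norm_smul, hu, Real.norm_of_nonneg (add_nonneg hs ht)]
  ring

section DiamLE

variable {G : Type*} [NormedAddCommGroup G] {s t : Set G} {D : ℝ}

lemma DiamLE.mono (h : DiamLE t D) (hst : s ⊆ t) : DiamLE s D :=
  fun a ha b hb => h a (hst ha) b (hst hb)

lemma diamLE_iff_subset_closedBall : DiamLE s D ↔ ∀ a ∈ s, s ⊆ closedBall a D := by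
  simp only [DiamLE, subset_def, mem_closedBall', dist_eq_norm]

lemma diamLE_closedConvexHull_iff [NormedSpace ℝ G] :
    DiamLE (closedConvexHull ℝ s) D ↔ DiamLE s D := by
  refine ⟨fun h => h.mono subset_closedConvexHull, fun h => ?_⟩
  have hball : ∀ a ∈ s, closedConvexHull ℝ s ⊆ closedBall a D := fun a ha =>
    closedConvexHull_min (diamLE_iff_subset_closedBall.1 h a ha) (convex_closedBall a D)
      isClosed_closedBall
  refine diamLE_iff_subset_closedBall.2 fun b hb => ?_
  refine closedConvexHull_min (fun a ha => ?_) (convex_closedBall b D) isClosed_closedBall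
  rw [mem_closedBall_comm]
  exact hball a ha hb

lemma diamLE_iUnion_closedBall_iff [NormedSpace ℝ G] [Nontrivial G] {ι : Type*} {c : ι → G}
    {r : ι → ℝ} (hr : ∀ j, 0 ≤ r j) :
    DiamLE (⋃ j, closedBall (c j) (r j)) D ↔ ∀ j j', ‖c j - c j'‖ ≤ D - r j - r j' := by
  constructor
  · intro h j j'
    obtain ⟨a, ha, b, hb, hab⟩ := exists_mem_closedBall_dist_add_le (c j) (c j') (hr j) (hr j')
    have := h a (mem_iUnion_of_mem j ha) b (mem_iUnion_of_mem j' hb)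
    rw [dist_eq_norm, dist_eq_norm] at hab
    linarith
  · intro h a ha b hb
    obtain ⟨j, ha⟩ := mem_iUnion.1 ha
    obtain ⟨j', hb⟩ := mem_iUnion.1 hb
    rw [mem_closedBall] at ha
    rw [mem_closedBall'] at hb
    have := dist_triangle4 a (c j) (c j') b
    rw [dist_eq_norm (c j)] at this
    rw [← dist_eq_norm]
    linarith [h j j']

end DiamLE

lemma mem_normalCone_iff_subset {s : Set F} {z v : F} :
    v ∈ normalCone s z ↔ s ⊆ {x | ⟪v, x - z⟫ ≤ 0} :=
  Iff.rfl

lemma normalCone_iUnion {ι : Type*} (s : ι → Set F) (z : F) :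
    normalCone (⋃ j, s j) z = ⋂ j, normalCone (s j) z := by
  ext v
  simp only [mem_iInter, mem_normalCone_iff_subset, iUnion_subset_iff]

lemma normalCone_closedConvexHull (s : Set F) (z : F) :
    normalCone (closedConvexHull ℝ s) z = normalCone s z := by
  refine Subset.antisymm (fun v hv x hx => hv x (subset_closedConvexHull hx)) fun v hv => ?_
  rw [mem_normalCone_iff_subset] at hv ⊢
  have hconvex : Convex ℝ {x | ⟪v, x - z⟫ ≤ 0} := by
    simpa only [Set.preimage, mem_Iic, innerₛₗ_apply_apply, inner_sub_right, sub_nonpos] using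
      (convex_Iic ⟪v, z⟫).linear_preimage (innerₛₗ ℝ v)
  exact closedConvexHull_min hv hconvex (isClosed_le (by fun_prop) continuous_const)

lemma inv_norm_smul_mem_normalCone_iff {s : Set F} {z v : F} :
    ‖v‖⁻¹ • v ∈ normalCone s z ↔ v ∈ normalCone s z := by
  rcases eq_or_ne v 0 with rfl | hv
  · simp
  · have hpos : 0 < ‖v‖⁻¹ := inv_pos.2 (norm_pos_iff.2 hv)
    simp only [normalCone, mem_ofPred_eq, real_inner_smul_left]
    exact forall₂_congr fun x _ => by simp [mul_nonpos_iff_pos_imp_nonpos, hpos, hpos.le]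

lemma mem_normalCone_closedBall_iff {c z n : F} {r : ℝ} (hn : ‖n‖ = 1) (hr : 0 ≤ r) :
    n ∈ normalCone (closedBall c r) z ↔ ⟪n, c + r • n - z⟫ ≤ 0 := by
  have hshift : ⟪n, c + r • n - z⟫ = ⟪n, c - z⟫ + r := by
    rw [add_sub_right_comm, inner_add_right, real_inner_smul_right, real_inner_self_eq_norm_sq,
      hn, one_pow, mul_one]
  refine ⟨fun h => h _ (by simp [norm_smul, hn, abs_of_nonneg hr]), fun h x hx => ?_⟩
  have hxc : ⟪n, x - c⟫ ≤ r :=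
    calc ⟪n, x - c⟫ ≤ ‖n‖ * ‖x - c‖ := real_inner_le_norm n (x - c)
      _ ≤ r := by rw [hn, one_mul, ← dist_eq_norm]; exact hx
  have hsplit : ⟪n, x - z⟫ = ⟪n, x - c⟫ + ⟪n, c - z⟫ := by
    rw [← inner_add_right, sub_add_sub_cancel]
  linarith

lemma exists_isClosed_convex_superset_iff {ι : Type*} {s : Set F} {D : ℝ} (hD : 0 ≤ D)
    {z n : ι → F} (hz : ∀ i, z i ∈ s) :
    (∃ C : Set F, C.Nonempty ∧ IsClosed C ∧ Convex ℝ C ∧ DiamLE C D ∧ s ⊆ C ∧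
        ∀ i, n i ∈ normalCone C (z i)) ↔
      DiamLE s D ∧ ∀ i, n i ∈ normalCone s (z i) := by
  constructor
  · rintro ⟨C, -, -, -, hCD, hsC, hn⟩
    exact ⟨hCD.mono hsC, fun i x hx => hn i x (hsC hx)⟩
  · rintro ⟨hsD, hn⟩
    rcases s.eq_empty_or_nonempty with rfl | hs
    · refine ⟨{0}, singleton_nonempty 0, isClosed_singleton, convex_singleton 0, ?_,
        empty_subset _, fun i => (hz i).elim⟩
      rintro a rfl b rfl
      simpa using hD
    · refine ⟨closedConvexHull ℝ s, hs.mono subset_closedConvexHull, isClosed_closedConvexHull,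
        convex_closedConvexHull, diamLE_closedConvexHull_iff.2 hsD, subset_closedConvexHull,
        fun i => ?_⟩
      rw [normalCone_closedConvexHull]
      exact hn i

lemma interpolatedBy_iff {ι κ : Type*} {C : Set F} {z v : ι → F} {x : κ → F} {δ : κ → ℝ} :
    InterpolatedBy C z v x δ ↔
      (⋃ j, closedBall (Sum.elim z x j) (Sum.elim (0 : ι → ℝ) δ j)) ⊆ C ∧
        ∀ i, ‖v i‖⁻¹ • v i ∈ normalCone C (z i) := by
  simp only [InterpolatedBy, deltaInterior, iUnion_subset_iff, Sum.forall, Sum.elim_inl,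
    Sum.elim_inr, Pi.zero_apply, closedBall_zero, singleton_subset_iff,
    inv_norm_smul_mem_normalCone_iff, mem_ofPred_eq, forall_and]
  exact and_right_comm

theorem convex_set_interpolation_general {d : ℕ} (hd : 1 ≤ d) {ι κ : Type*}
    (D : ℝ) (hD : 0 ≤ D) (z v : ι → EuclideanSpace ℝ (Fin d)) (hv : ∀ i, v i ≠ 0)
    (x : κ → EuclideanSpace ℝ (Fin d)) (δ : κ → ℝ) (hδ : ∀ k, 0 ≤ δ k) :
    (∃ C : Set (EuclideanSpace ℝ (Fin d)), C.Nonempty ∧ IsClosed C ∧ Convex ℝ C ∧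
        DiamLE C D ∧ InterpolatedBy C z v x δ) ↔
      ((∀ i j, ⟪‖v i‖⁻¹ • v i, z j - z i⟫ ≤ 0) ∧
       (∀ i k, ⟪‖v i‖⁻¹ • v i, x k + δ k • (‖v i‖⁻¹ • v i) - z i⟫ ≤ 0) ∧
       (∀ k l, ‖x k - x l‖ ≤ D - δ k - δ l) ∧
       (∀ i k, ‖z i - x k‖ ≤ D - δ k) ∧
       (∀ i j, ‖z i - z j‖ ≤ D)) := by
  have : Nonempty (Fin d) := ⟨⟨0, hd⟩⟩
  have hr : ∀ j, 0 ≤ Sum.elim (0 : ι → ℝ) δ j := Sum.forall.2 ⟨fun _ => le_rfl, hδ⟩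
  have hz : ∀ i, z i ∈ ⋃ j, closedBall (Sum.elim z x j) (Sum.elim (0 : ι → ℝ) δ j) :=
    fun i => mem_iUnion_of_mem (Sum.inl i) (mem_closedBall_self le_rfl)
  have hball := fun i j => mem_normalCone_closedBall_iff (c := Sum.elim z x j) (z := z i)
    (n := ‖v i‖⁻¹ • v i) (norm_smul_inv_norm (hv i)) (hr j)
  simp_rw [interpolatedBy_iff]
  rw [exists_isClosed_convex_superset_iff hD hz, diamLE_iUnion_closedBall_iff hr]
  simp only [normalCone_iUnion, mem_iInter, hball, Sum.forall, Sum.elim_inl, Sum.elim_inr,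
    Pi.zero_apply, zero_smul, add_zero, sub_zero, forall_and]
  constructor
  · rintro ⟨⟨⟨hzz, -⟩, hzx, hxx⟩, hzn, hxn⟩
    exact ⟨hzn, hxn, hxx, hzx, hzz⟩
  · rintro ⟨hzn, hxn, hxx, hzx, hzz⟩
    exact ⟨⟨⟨hzz, fun k i => norm_sub_rev (z i) (x k) ▸ hzx i k⟩, hzx, hxx⟩, hzn, hxn⟩

/-- Interpolation by a bounded-diameter convex set: a nonempty closed convex set `C` with
`diam C ≤ D` interpolating the data exists iff the five listed conditions hold,
where `n i = v i / ‖v i‖`. -/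
theorem convex_set_interpolation {d : ℕ} (hd : 1 ≤ d) {ι κ : Type*} [Fintype ι] [Fintype κ]
    (D : ℝ) (hD : 0 ≤ D) (z v : ι → EuclideanSpace ℝ (Fin d)) (hv : ∀ i, v i ≠ 0)
    (x : κ → EuclideanSpace ℝ (Fin d)) (δ : κ → ℝ) (hδ : ∀ k, 0 ≤ δ k) :
    (∃ C : Set (EuclideanSpace ℝ (Fin d)), C.Nonempty ∧ IsClosed C ∧ Convex ℝ C ∧
        DiamLE C D ∧ InterpolatedBy C z v x δ) ↔
      ((∀ i j, ⟪‖v i‖⁻¹ • v i, z j - z i⟫ ≤ 0) ∧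
       (∀ i k, ⟪‖v i‖⁻¹ • v i, x k + δ k • (‖v i‖⁻¹ • v i) - z i⟫ ≤ 0) ∧
       (∀ k l, ‖x k - x l‖ ≤ D - δ k - δ l) ∧
       (∀ i k, ‖z i - x k‖ ≤ D - δ k) ∧
       (∀ i j, ‖z i - z j‖ ≤ D)) :=
  convex_set_interpolation_general hd D hD z v hv x δ hδ
end
end

section
/- Let β > 0, δ ≥ 0, set h = max(δ, 1/β), and let α > 0 with 1/α ≥ h, D ≥ 2h, and R ≥ δ be such that N := (R + h − δ)²/h² is a positive integer. Work in E = EuclideanSpace ℝ (Fin d) with d ≥ N. Then there exist a nonempty closed convex set C ⊆ E that is α-strongly convex and β-smooth with diam(C) ≤ D, a point q ∈ E with closedBall(q, δ) ⊆ C, and x₀ ∈ E with ‖x₀ − q‖ ≤ R, such that for every array of reals (H_{i,j})_{0 ≤ j ≤ i ≤ N−1} there exist unit vectors n₀, …, n_{N−1} ∈ E with the following properties: defining x_{i+1} = x₀ − Σ_{j=0}^{i} H_{i,j}·n_j for 0 ≤ i ≤ N−2, one has ⟪n_i, y − x_i⟫ ≤ 0 for all y ∈ C and all 0 ≤ i ≤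 N−1, and x_k does not belong to the interior of C for any 0 ≤ k ≤ N−1. -/
/-!
The hard instance is the ball `closedBall 0 h`, `h = max δ (1/β)`, which is `α`-strongly convex
and `β`-smooth because `1/β ≤ h ≤ 1/α`. For orthonormal `e₀, …, e_{N-1}` start at
`x₀ = h (e₀ + ⋯ + e_{N-1})`, so that `‖x₀‖ = h √N = R + h - δ`, and answer the `k`-th query with
`e_k`. Since `x_k - x₀` lies in the span of `e₀, …, e_{k-1}`, we get `⟪e_k, x_k⟫ = ⟪e_k, x₀⟫ = h`:
`x_k` lies on the hyperplane `⟪e_k, ·⟫ = h` supporting the ball, so `e_k` is a valid separating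
normal at `x_k` and `x_k` is not interior.
-/

open Metric Set
open scoped RealInnerProductSpace Pointwise

noncomputable section

variable {F : Type*} [NormedAddCommGroup F] [InnerProductSpace ℝ F]

lemma dist_add_smul_sub_smul_self {c n : F} (hn : ‖n‖ = 1) (r s : ℝ) :
    dist (c + r • n - s • n) c = |r - s| := by
  rw [dist_eq_norm, add_sub_assoc, add_sub_cancel_left, ← sub_smul, norm_smul, hn, mul_one,
    Real.norm_eq_abs]

lemma eq_add_smul_of_mem_normalCone_closedBall {c z n : F} {r : ℝ} (hr : 0 < r)
    (hz : z ∈ frontier (closedBall c r)) (hn : n ∈ normalCone (closedBall c r) z)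
    (hn1 : ‖n‖ = 1) : z = c + r • n := by
  rw [frontier_closedBall c hr.ne', mem_sphere_iff_norm] at hz
  have hmem : c + r • n ∈ closedBall c r := by
    rw [mem_closedBall, dist_eq_norm, add_sub_cancel_left, norm_smul, hn1, mul_one,
      Real.norm_eq_abs, abs_of_pos hr]
  have hle : r ≤ ⟪n, z - c⟫ := by
    have := hn _ hmem
    rw [show c + r • n - z = r • n - (z - c) by abel, inner_sub_right, real_inner_smul_right,
      real_inner_self_eq_norm_sq, hn1] at this
    linarith
  have hge : ⟪n, z - c⟫ ≤ r := by
    simpa [hn1, hz] using real_inner_le_norm n (z - c)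
  have hcol := inner_eq_norm_mul_iff_real.mp (show ⟪n, z - c⟫ = ‖n‖ * ‖z - c‖ by
    rw [hn1, hz]; linarith)
  rw [hn1, hz, one_smul] at hcol
  rw [hcol, add_sub_cancel]

lemma isStronglyConvexSet_closedBall {α r : ℝ} (c : F) (hr : 0 < r) (hrα : r ≤ 1 / α) :
    IsStronglyConvexSet α (closedBall c r) := by
  intro z hz n hn hn1
  rw [eq_add_smul_of_mem_normalCone_closedBall hr hz hn hn1]
  refine closedBall_subset_closedBall' ?_
  rw [dist_comm, dist_add_smul_sub_smul_self hn1, abs_of_nonpos (by linarith)]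
  linarith

lemma isSmoothSet_closedBall {β r : ℝ} (c : F) (hβ : 0 < β) (hβr : 1 / β ≤ r) :
    IsSmoothSet β (closedBall c r) := by
  have hr : 0 < r := (one_div_pos.mpr hβ).trans_le hβr
  intro z hz n hn hn1
  rw [eq_add_smul_of_mem_normalCone_closedBall hr hz hn hn1]
  refine closedBall_subset_closedBall' ?_
  rw [dist_add_smul_sub_smul_self hn1, abs_of_nonneg (by linarith)]
  linarith

lemma diamLE_closedBall {E : Type*} [NormedAddCommGroup E] {r D : ℝ} (c : E)
    (hD : 2 * r ≤ D) : DiamLE (closedBall c r) D := by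
  intro x hx y hy
  rw [← dist_eq_norm]
  linarith [dist_triangle_right x y c, mem_closedBall.mp hx, mem_closedBall.mp hy]

lemma exists_norm_eq_and_norm_sub_eq {x : F} {a b : ℝ} (ha : 0 ≤ a) (hb : 0 ≤ b)
    (hx : ‖x‖ = a + b) : ∃ q : F, ‖q‖ = b ∧ ‖x - q‖ = a := by
  rcases (add_nonneg ha hb).eq_or_lt with hab | hab
  · exact ⟨0, by simp; linarith, by simp [hx]; linarith⟩
  refine ⟨(b / (a + b)) • x, ?_, ?_⟩
  · rw [norm_smul_of_nonneg (by positivity), hx, div_mul_cancel₀ _ hab.ne']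
  · rw [show x - (b / (a + b)) • x = (1 - b / (a + b)) • x by rw [sub_smul, one_smul],
      norm_smul_of_nonneg, hx]
    · field_simp; ring
    · rw [sub_nonneg, div_le_one hab]; linarith

lemma exists_orthonormal_of_le_finrank [FiniteDimensional ℝ F] {N : ℕ}
    (hN : N ≤ Module.finrank ℝ F) : ∃ e : ℕ → F, Orthonormal ℝ (fun i : Fin N => e i) := by
  let b := stdOrthonormalBasis ℝ F
  refine ⟨fun i => if hi : i < Module.finrank ℝ F then b ⟨i, hi⟩ else 0, ?_⟩
  convert b.orthonormal.comp _ (Fin.castLE_injective hN) with i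
  simp only [i.isLt.trans_le hN, dite_true]
  rfl

lemma Orthonormal.norm_sum_const_smul_sq {ι : Type*} [Fintype ι] {v : ι → F}
    (hv : Orthonormal ℝ v) (h : ℝ) : ‖∑ i, h • v i‖ ^ 2 = Fintype.card ι * h ^ 2 := by
  rw [← real_inner_self_eq_norm_sq, hv.inner_sum (fun _ => h) (fun _ => h)]
  simp only [conj_trivial, Finset.sum_const, Finset.card_univ, nsmul_eq_mul, sq]

lemma Orthonormal.inner_iterate_eq {N : ℕ} {e : ℕ → F}
    (he : Orthonormal ℝ (fun i : Fin N => e i)) {x : ℕ → F} {x₀ : F} {H : ℕ → ℕ → ℝ}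
    (hx0 : x 0 = x₀)
    (hstep : ∀ i, i + 1 < N → x (i + 1) = x₀ - ∑ j ∈ Finset.range (i + 1), H i j • e j)
    {k : ℕ} (hk : k < N) : ⟪e k, x k⟫ = ⟪e k, x₀⟫ := by
  cases k with
  | zero => rw [hx0]
  | succ m =>
    rw [hstep m hk, inner_sub_right, inner_sum, sub_eq_self]
    refine Finset.sum_eq_zero fun j hj => ?_
    have hjk : j < m + 1 := Finset.mem_range.mp hj
    have horth : ⟪e (m + 1), e j⟫ = 0 :=
      he.2 (i := ⟨m + 1, hk⟩) (j := ⟨j, hjk.trans hk⟩) (by simp [Fin.ext_iff, hjk.ne'])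
    rw [real_inner_smul_right, horth, mul_zero]

lemma mem_normalCone_closedBall_of_inner_eq {c x n : F} {r : ℝ} (hn : ‖n‖ = 1)
    (hx : ⟪n, x - c⟫ = r) : n ∈ normalCone (closedBall c r) x := by
  intro y hy
  have hcs := real_inner_le_norm n (y - c)
  rw [hn, one_mul] at hcs
  rw [show y - x = (y - c) - (x - c) by abel, inner_sub_right, hx]
  linarith [mem_closedBall_iff_norm.mp hy]

lemma notMem_ball_of_inner_eq {c x n : F} {r : ℝ} (hn : ‖n‖ = 1) (hx : ⟪n, x - c⟫ = r) :
    x ∉ ball c r := by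
  rw [mem_ball_iff_norm, not_lt, ← hx]
  simpa [hn] using real_inner_le_norm n (x - c)

theorem separating_hyperplane_lower_bound_general {d : ℕ} (β δ α D R : ℝ)
    (hβ : 0 < β) (hδ : 0 ≤ δ)
    (hh : max δ (1 / β) ≤ 1 / α) (hD : 2 * max δ (1 / β) ≤ D) (hR : δ ≤ R)
    (N : ℕ)
    (hNval : (N : ℝ) = (R + max δ (1 / β) - δ) ^ 2 / max δ (1 / β) ^ 2)
    (hdN : N ≤ d) :
    ∃ C : Set (EuclideanSpace ℝ (Fin d)), ∃ q x₀ : EuclideanSpace ℝ (Fin d),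
      C.Nonempty ∧ IsClosed C ∧ Convex ℝ C ∧ IsStronglyConvexSet α C ∧ IsSmoothSet β C ∧
      DiamLE C D ∧ closedBall q δ ⊆ C ∧ ‖x₀ - q‖ ≤ R ∧
      ∀ H : ℕ → ℕ → ℝ, ∃ n : ℕ → EuclideanSpace ℝ (Fin d),
        (∀ i < N, ‖n i‖ = 1) ∧
        ∀ x : ℕ → EuclideanSpace ℝ (Fin d), x 0 = x₀ →
          (∀ i, i + 1 < N → x (i + 1) = x₀ - ∑ j ∈ Finset.range (i + 1), H i j • n j) →
          (∀ i < N, ∀ y ∈ C, ⟪n i, y - x i⟫ ≤ 0) ∧ ∀ k < N, x k ∉ interior C := by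
  set h := max δ (1 / β)
  have hpos : 0 < h := (one_div_pos.mpr hβ).trans_le (le_max_right _ _)
  obtain ⟨e, he⟩ := exists_orthonormal_of_le_finrank (F := EuclideanSpace ℝ (Fin d))
    (N := N) (by rwa [finrank_euclideanSpace_fin])
  set x₀ := ∑ i : Fin N, h • e i
  have hx₀ : ‖x₀‖ = R + (h - δ) := by
    refine (pow_left_inj₀ (norm_nonneg _) (by linarith [le_max_left δ (1 / β)]) two_ne_zero).mp ?_
    rw [he.norm_sum_const_smul_sq, Fintype.card_fin, hNval]
    field_simp
    ring
  obtain ⟨q, hq, hx₀q⟩ :=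
    exists_norm_eq_and_norm_sub_eq (by linarith) (sub_nonneg.mpr (le_max_left _ _)) hx₀
  refine ⟨closedBall 0 h, q, x₀, nonempty_closedBall.mpr hpos.le, isClosed_closedBall,
    convex_closedBall _ _, isStronglyConvexSet_closedBall _ hpos hh,
    isSmoothSet_closedBall _ hβ (le_max_right _ _), diamLE_closedBall _ hD,
    closedBall_subset_closedBall' (by rw [dist_zero_right, hq]; linarith), hx₀q.le,
    fun H => ⟨e, fun i hi => he.1 ⟨i, hi⟩, fun x hx0 hstep => ?_⟩⟩
  have hquery : ∀ k < N, ⟪e k, x k - 0⟫ = h := fun k hk => by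
    rw [sub_zero, he.inner_iterate_eq hx0 hstep hk, he.inner_right_fintype (fun _ => h) ⟨k, hk⟩]
  refine ⟨fun i hi => mem_normalCone_closedBall_of_inner_eq (he.1 ⟨i, hi⟩) (hquery i hi),
    fun k hk => ?_⟩
  rw [interior_closedBall _ hpos.ne']
  exact notMem_ball_of_inner_eq (he.1 ⟨k, hk⟩) (hquery k hk)

/-- Minimax lower bound for separating hyperplane methods: there is a hard problem
instance `(C, q, x₀)` on which any separating hyperplane method `x_{i+1} = x₀ - Σ_{j≤i}
H_{i,j} n_j` fails to reach the interior of `C` within `N = (R + h - δ)²/h²` queries,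
where `h = max δ (1/β)`. -/
theorem separating_hyperplane_lower_bound {d : ℕ} (β δ α D R : ℝ)
    (hβ : 0 < β) (hδ : 0 ≤ δ) (hα : 0 < α)
    (hh : max δ (1 / β) ≤ 1 / α) (hD : 2 * max δ (1 / β) ≤ D) (hR : δ ≤ R)
    (N : ℕ) (hN : 1 ≤ N)
    (hNval : (N : ℝ) = (R + max δ (1 / β) - δ) ^ 2 / max δ (1 / β) ^ 2)
    (hdN : N ≤ d) :
    ∃ C : Set (EuclideanSpace ℝ (Fin d)), ∃ q x₀ : EuclideanSpace ℝ (Fin d),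
      C.Nonempty ∧ IsClosed C ∧ Convex ℝ C ∧ IsStronglyConvexSet α C ∧ IsSmoothSet β C ∧
      DiamLE C D ∧ closedBall q δ ⊆ C ∧ ‖x₀ - q‖ ≤ R ∧
      ∀ H : ℕ → ℕ → ℝ, ∃ n : ℕ → EuclideanSpace ℝ (Fin d),
        (∀ i < N, ‖n i‖ = 1) ∧
        ∀ x : ℕ → EuclideanSpace ℝ (Fin d), x 0 = x₀ →
          (∀ i, i + 1 < N → x (i + 1) = x₀ - ∑ j ∈ Finset.range (i + 1), H i j • n j) →
          (∀ i < N, ∀ y ∈ C, ⟪n i, y - x i⟫ ≤ 0) ∧ ∀ k < N, x k ∉ interior C :=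
  separating_hyperplane_lower_bound_general β δ α D R hβ hδ hh hD hR N hNval hdN
end
end

section
/- Let N ≥ 1, β > 0, δ > 0, R ≥ δ, and c ∈ (0,1). There exist nonempty closed convex β-smooth sets C₁, C₂ ⊆ ℝ² (Euclidean plane), a point q with closedBall(q, δ) ⊆ C₁ ∩ C₂, a point x₀ with ‖x₀ − q‖ ≤ R, and sequences (z_k)_{0≤k≤N−1}, (x_k)_{0≤k≤N} such that: for each k, z_k ∈ C₁ with ‖x_k − z_k‖ ≤ ‖x_k − y‖ for all y ∈ C₁, and x_{k+1} ∈ C₂ with ‖z_k − x_{k+1}‖ ≤ ‖z_k − y‖ for all y ∈ C₂ (the alternating projections iteration), and the final iterate satisfies infDist(x_N, C₁ ∩ C₂) ≥ c^{2N−1}·(√(R² − δ²) − δ·(c + 1)/√(1 − c²)). -/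
open Metric Set
open scoped RealInnerProductSpace Pointwise

noncomputable section

variable {F : Type*} [NormedAddCommGroup F] [InnerProductSpace ℝ F]

/-!
Two half-planes are `β`-smooth for every `β`. Let their boundary lines meet at the origin with
unit directions `p`, `w`, `⟪p, w⟫ = c`, each half-plane lying on the side away from the other
line. Projecting a point `a • w` (`a ≥ 0`) onto the first half-plane gives `(a c) • p`, and
symmetrically, so alternating projections started at `d • p` zigzag between the two lines, with
`x_N = d c^(2N-1) • w`. Since `(1 - c²) w` is a nonnegative combination of the two outer normals,
the intersection lies in `{⟪w, ·⟫ ≤ 0}`, so `x_N` stays at distance `d c^(2N-1)` from it. Taking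
`q` the centre of the `δ`-ball inscribed in the wedge, the starting point at distance `R` from `q`
on the line `ℝ p` has `d = √(R² - δ²) - δ (c + 1) / √(1 - c²)`.
-/

theorem isClosed_halfSpace (u : F) (a : ℝ) : IsClosed {y : F | ⟪u, y⟫ ≤ a} :=
  isClosed_le (continuous_const.inner continuous_id) continuous_const

theorem convex_halfSpace (u : F) (a : ℝ) : Convex ℝ {y : F | ⟪u, y⟫ ≤ a} :=
  convex_halfSpace_le ⟨inner_add_right u, fun t y => real_inner_smul_right u y t⟩ a

theorem isSmoothSet_halfSpace (β a : ℝ) (u : F) : IsSmoothSet β {y : F | ⟪u, y⟫ ≤ a} := by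
  intro z hz n hn hn1 y hy
  have hzu : ⟪u, z⟫ ≤ a := (isClosed_halfSpace u a).frontier_subset hz
  have hnu : 0 ≤ ⟪n, u⟫ := by
    have := hn (z - u) (by
      simp only [mem_ofPred_eq, inner_sub_right, real_inner_self_eq_norm_sq]
      nlinarith [norm_nonneg u])
    simpa [inner_sub_right] using this
  -- testing the normal cone in the boundary hyperplane forces `n = u / ‖u‖`
  have hnu_sq : ‖u‖ ^ 2 ≤ ⟪n, u⟫ ^ 2 := by
    have := hn (z + (‖u‖ ^ 2 • n - ⟪n, u⟫ • u)) (by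
      simp only [mem_ofPred_eq, inner_add_right, inner_sub_right, real_inner_smul_right,
        real_inner_self_eq_norm_sq, real_inner_comm n u]
      linarith)
    simp only [add_sub_cancel_left, inner_sub_right, real_inner_smul_right,
      real_inner_self_eq_norm_sq, hn1] at this
    linarith
  have hnorm : ‖u‖ ≤ ⟪n, u⟫ := abs_le_of_sq_le_sq' hnu_sq hnu |>.2
  rw [mem_closedBall_iff_norm] at hy
  have hβ : 0 ≤ 1 / β := (norm_nonneg _).trans hy
  have hyu : ⟪u, y - (z - (1 / β) • n)⟫ ≤ ‖u‖ * (1 / β) :=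
    (real_inner_le_norm _ _).trans (mul_le_mul_of_nonneg_left hy (norm_nonneg u))
  simp only [inner_sub_right, real_inner_smul_right, real_inner_comm n u] at hyu
  show ⟪u, y⟫ ≤ a
  nlinarith

theorem closedBall_subset_halfSpace {u q : F} {a δ : ℝ} (h : ⟪u, q⟫ + δ * ‖u‖ ≤ a) :
    closedBall q δ ⊆ {y | ⟪u, y⟫ ≤ a} := by
  intro y hy
  rw [mem_closedBall_iff_norm] at hy
  have := (real_inner_le_norm u (y - q)).trans (mul_le_mul_of_nonneg_left hy (norm_nonneg u))
  rw [inner_sub_right] at this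
  show ⟪u, y⟫ ≤ a
  linarith

theorem norm_smul_le_norm_add_smul_sub {u z y : F} {t : ℝ} (ht : 0 ≤ t)
    (hy : ⟪u, y⟫ ≤ ⟪u, z⟫) : ‖t • u‖ ≤ ‖z + t • u - y‖ := by
  rcases eq_or_ne u 0 with rfl | hu
  · simp
  have key : ‖t • u‖ * ‖u‖ ≤ ‖z + t • u - y‖ * ‖u‖ := calc
    ‖t • u‖ * ‖u‖ = ⟪u, t • u⟫ := by
      rw [real_inner_smul_right, real_inner_self_eq_norm_sq, norm_smul, Real.norm_of_nonneg ht]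
      ring
    _ ≤ ⟪u, z + t • u - y⟫ := by rw [inner_sub_right, inner_add_right]; linarith
    _ ≤ ‖z + t • u - y‖ * ‖u‖ := by rw [mul_comm]; exact real_inner_le_norm _ _
  exact le_of_mul_le_mul_right key (norm_pos_iff.2 hu)

def IsNearestPoint {E : Type*} [SeminormedAddCommGroup E] (C : Set E) (x z : E) : Prop :=
  z ∈ C ∧ ∀ y ∈ C, ‖x - z‖ ≤ ‖x - y‖

theorem IsNearestPoint.self {E : Type*} [SeminormedAddCommGroup E] {C : Set E} {x : E}
    (hx : x ∈ C) : IsNearestPoint C x x :=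
  ⟨hx, fun y _ => by simp⟩

/-- For unit `p`: the half-space bounded by the hyperplane through `0` normal to the component of
`w` orthogonal to `p`, on the side away from `w`. In the plane: the side of the line `ℝ p` not
containing `w`. -/
def halfSpaceAwayFrom (p w : F) : Set F :=
  {y | ⟪w - ⟪p, w⟫ • p, y⟫ ≤ 0}

def inscribedCenter (p w : F) (δ : ℝ) : F :=
  -(δ / √(1 - ⟪p, w⟫ ^ 2)) • (p + w)

section Wedge

variable {p w : F}

theorem zero_mem_halfSpaceAwayFrom : (0 : F) ∈ halfSpaceAwayFrom p w := by
  simp [halfSpaceAwayFrom]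

theorem norm_sub_inner_smul_sq (hp : ‖p‖ = 1) (hw : ‖w‖ = 1) :
    ‖w - ⟪p, w⟫ • p‖ ^ 2 = 1 - ⟪p, w⟫ ^ 2 := by
  rw [norm_sub_sq_real, norm_smul, real_inner_smul_right, Real.norm_eq_abs, mul_pow, sq_abs, hp,
    hw, real_inner_comm w p]
  ring

theorem norm_sub_inner_smul (hp : ‖p‖ = 1) (hw : ‖w‖ = 1) :
    ‖w - ⟪p, w⟫ • p‖ = √(1 - ⟪p, w⟫ ^ 2) := by
  rw [← norm_sub_inner_smul_sq hp hw, Real.sqrt_sq (norm_nonneg _)]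

theorem smul_mem_halfSpaceAwayFrom (hp : ‖p‖ = 1) (t : ℝ) : t • p ∈ halfSpaceAwayFrom p w := by
  simp [halfSpaceAwayFrom, inner_sub_left, real_inner_smul_left, real_inner_smul_right, hp,
    real_inner_comm p w, mul_comm]

theorem isNearestPoint_halfSpaceAwayFrom (hp : ‖p‖ = 1) {a : ℝ} (ha : 0 ≤ a) :
    IsNearestPoint (halfSpaceAwayFrom p w) (a • w) ((a * ⟪p, w⟫) • p) := by
  set u := w - ⟪p, w⟫ • p
  have hup : ⟪u, p⟫ = 0 := by
    simp [u, inner_sub_left, real_inner_smul_left, hp, real_inner_comm p w]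
  have hsplit : a • w = (a * ⟪p, w⟫) • p + a • u := by module
  have hz : ⟪u, (a * ⟪p, w⟫) • p⟫ = 0 := by rw [real_inner_smul_right, hup, mul_zero]
  refine ⟨smul_mem_halfSpaceAwayFrom hp _, fun y (hy : ⟪u, y⟫ ≤ 0) => ?_⟩
  rw [hsplit, add_sub_cancel_left]
  exact norm_smul_le_norm_add_smul_sub ha (hz ▸ hy)

theorem inner_nonpos_of_mem_inter (hc₀ : 0 ≤ ⟪p, w⟫) (hc₁ : ⟪p, w⟫ < 1) {y : F}
    (h₁ : y ∈ halfSpaceAwayFrom p w) (h₂ : y ∈ halfSpaceAwayFrom w p) : ⟪w, y⟫ ≤ 0 := by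
  have key : (1 - ⟪p, w⟫ ^ 2) * ⟪w, y⟫ =
      ⟪w - ⟪p, w⟫ • p, y⟫ + ⟪p, w⟫ * ⟪p - ⟪w, p⟫ • w, y⟫ := by
    simp only [inner_sub_left, real_inner_smul_left, real_inner_comm p w]
    ring
  have h₁' : ⟪w - ⟪p, w⟫ • p, y⟫ ≤ 0 := h₁
  have h₂' : ⟪p - ⟪w, p⟫ • w, y⟫ ≤ 0 := h₂
  have hc : 0 < 1 - ⟪p, w⟫ ^ 2 := by nlinarith
  nlinarith [mul_nonpos_of_nonneg_of_nonpos hc₀ h₂']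

theorem le_infDist_smul (hw : ‖w‖ = 1) (hc₀ : 0 ≤ ⟪p, w⟫) (hc₁ : ⟪p, w⟫ < 1) (a : ℝ) :
    a ≤ infDist (a • w) (halfSpaceAwayFrom p w ∩ halfSpaceAwayFrom w p) := by
  have hne : (halfSpaceAwayFrom p w ∩ halfSpaceAwayFrom w p).Nonempty :=
    ⟨0, zero_mem_halfSpaceAwayFrom, zero_mem_halfSpaceAwayFrom⟩
  rw [le_infDist hne]
  rintro y ⟨h₁, h₂⟩
  have hwy := inner_nonpos_of_mem_inter hc₀ hc₁ h₁ h₂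
  calc a = ⟪w, a • w⟫ := by rw [real_inner_smul_right, real_inner_self_eq_norm_sq, hw]; ring
    _ ≤ ⟪w, a • w - y⟫ := by rw [inner_sub_right]; linarith
    _ ≤ dist (a • w) y := by
      simpa [dist_eq_norm, hw] using real_inner_le_norm w (a • w - y)

theorem inscribedCenter_comm (δ : ℝ) : inscribedCenter w p δ = inscribedCenter p w δ := by
  simp [inscribedCenter, real_inner_comm, add_comm]

theorem closedBall_inscribedCenter_subset (hp : ‖p‖ = 1) (hw : ‖w‖ = 1) (δ : ℝ) :
    closedBall (inscribedCenter p w δ) δ ⊆ halfSpaceAwayFrom p w := by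
  refine closedBall_subset_halfSpace (le_of_eq ?_)
  have hu : ⟪w - ⟪p, w⟫ • p, p + w⟫ = ‖w - ⟪p, w⟫ • p‖ ^ 2 := by
    rw [norm_sub_inner_smul_sq hp hw]
    simp only [inner_sub_left, inner_add_right, real_inner_smul_left, real_inner_self_eq_norm_sq,
      hp, hw, real_inner_comm p w]
    ring
  rw [inscribedCenter, real_inner_smul_right, hu, ← norm_sub_inner_smul hp hw]
  rcases eq_or_ne ‖w - ⟪p, w⟫ • p‖ 0 with h | h
  · simp [h]
  · field_simp
    ring

/-- The inscribed ball touches the line `ℝ p` at `-(δ (c + 1) / √(1 - c²)) • p`, `c = ⟪p, w⟫`. -/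
theorem norm_smul_sub_inscribedCenter_sq (hp : ‖p‖ = 1) (hw : ‖w‖ = 1) (hc : ⟪p, w⟫ ^ 2 < 1)
    (t δ : ℝ) :
    ‖(t - δ * (⟪p, w⟫ + 1) / √(1 - ⟪p, w⟫ ^ 2)) • p - inscribedCenter p w δ‖ ^ 2 =
      t ^ 2 + δ ^ 2 := by
  rw [inscribedCenter]
  set c := ⟪p, w⟫
  set s := √(1 - c ^ 2)
  have hs : s ^ 2 = 1 - c ^ 2 := Real.sq_sqrt (by linarith)
  have hs₀ : s ≠ 0 := by positivity
  have hv : (t - δ * (c + 1) / s) • p - -(δ / s) • (p + w) =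
      (t - δ * c / s) • p + (δ / s) • w := by
    match_scalars <;> ring
  rw [hv, norm_add_sq_real, norm_smul, norm_smul, real_inner_smul_left, real_inner_smul_right,
    Real.norm_eq_abs, Real.norm_eq_abs, mul_pow, mul_pow, sq_abs, sq_abs, hp, hw]
  field_simp
  linear_combination (-δ ^ 2) * hs

/-- Alternating projections started at `d • p`: each projection onto the opposite face
multiplies the distance to the apex `0` by `⟪p, w⟫`. -/
def zigzag (p w : F) (d : ℝ) : ℕ → F
  | 0 => d • p
  | k + 1 => (d * ⟪p, w⟫ ^ (2 * k + 1)) • w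

theorem isNearestPoint_zigzag (hp : ‖p‖ = 1) (hc : 0 ≤ ⟪p, w⟫) {d : ℝ} (hd : 0 ≤ d) :
    ∀ k, IsNearestPoint (halfSpaceAwayFrom p w) (zigzag p w d k) ((d * ⟪p, w⟫ ^ (2 * k)) • p)
  | 0 => by simpa [zigzag] using IsNearestPoint.self (smul_mem_halfSpaceAwayFrom hp d)
  | k + 1 => by
    convert isNearestPoint_halfSpaceAwayFrom hp (by positivity : 0 ≤ d * ⟪p, w⟫ ^ (2 * k + 1))
      using 2
    · rfl
    · ring

theorem isNearestPoint_zigzag_succ (hw : ‖w‖ = 1) (hc : 0 ≤ ⟪p, w⟫) {d : ℝ} (hd : 0 ≤ d)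
    (k : ℕ) :
    IsNearestPoint (halfSpaceAwayFrom w p) ((d * ⟪p, w⟫ ^ (2 * k)) • p) (zigzag p w d (k + 1)) := by
  convert isNearestPoint_halfSpaceAwayFrom hw (by positivity : 0 ≤ d * ⟪p, w⟫ ^ (2 * k)) using 2
  rw [zigzag, real_inner_comm w p, pow_succ, mul_assoc]

end Wedge

theorem exists_unit_vectors_inner_eq {c : ℝ} (hc : |c| ≤ 1) :
    ∃ p w : EuclideanSpace ℝ (Fin 2), ‖p‖ = 1 ∧ ‖w‖ = 1 ∧ ⟪p, w⟫ = c := by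
  have hs : √(1 - c ^ 2) ^ 2 = 1 - c ^ 2 := Real.sq_sqrt (by nlinarith [abs_le.1 hc])
  refine ⟨!₂[1, 0], !₂[c, √(1 - c ^ 2)], ?_, ?_, ?_⟩
  · simp [EuclideanSpace.norm_eq, Fin.sum_univ_two]
  · simp [EuclideanSpace.norm_eq, Fin.sum_univ_two, hs]
  · simp [PiLp.inner_apply, Fin.sum_univ_two]

theorem alternating_projections_lower_bound_general (N : ℕ) (hN : 1 ≤ N) (β δ R c : ℝ)
    (hδ : 0 < δ) (hR : δ ≤ R) (hc : c ∈ Set.Ioo (0 : ℝ) 1) :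
    ∃ C₁ C₂ : Set (EuclideanSpace ℝ (Fin 2)), ∃ q x₀ : EuclideanSpace ℝ (Fin 2),
      ∃ z x : ℕ → EuclideanSpace ℝ (Fin 2),
      C₁.Nonempty ∧ IsClosed C₁ ∧ Convex ℝ C₁ ∧ IsSmoothSet β C₁ ∧
      C₂.Nonempty ∧ IsClosed C₂ ∧ Convex ℝ C₂ ∧ IsSmoothSet β C₂ ∧
      closedBall q δ ⊆ C₁ ∩ C₂ ∧ ‖x₀ - q‖ ≤ R ∧ x 0 = x₀ ∧
      (∀ k < N, z k ∈ C₁ ∧ (∀ y ∈ C₁, ‖x k - z k‖ ≤ ‖x k - y‖) ∧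
        x (k + 1) ∈ C₂ ∧ (∀ y ∈ C₂, ‖z k - x (k + 1)‖ ≤ ‖z k - y‖)) ∧
      c ^ (2 * N - 1) * (Real.sqrt (R ^ 2 - δ ^ 2) - δ * (c + 1) / Real.sqrt (1 - c ^ 2)) ≤
        Metric.infDist (x N) (C₁ ∩ C₂) := by
  obtain ⟨hc₀, hc₁⟩ := hc
  obtain ⟨p, w, hp, hw, rfl⟩ := exists_unit_vectors_inner_eq (abs_le.2 ⟨by linarith, hc₁.le⟩)
  have hC (u v : EuclideanSpace ℝ (Fin 2)) : (halfSpaceAwayFrom u v).Nonempty ∧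
      IsClosed (halfSpaceAwayFrom u v) ∧ Convex ℝ (halfSpaceAwayFrom u v) ∧
      IsSmoothSet β (halfSpaceAwayFrom u v) :=
    ⟨⟨0, zero_mem_halfSpaceAwayFrom⟩, isClosed_halfSpace _ _, convex_halfSpace _ _,
      isSmoothSet_halfSpace _ _ _⟩
  obtain ⟨hne₁, hcl₁, hcv₁, hsm₁⟩ := hC p w
  obtain ⟨hne₂, hcl₂, hcv₂, hsm₂⟩ := hC w p
  have hball : closedBall (inscribedCenter p w δ) δ ⊆
      halfSpaceAwayFrom p w ∩ halfSpaceAwayFrom w p :=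
    subset_inter (closedBall_inscribedCenter_subset hp hw δ)
      (inscribedCenter_comm (p := p) (w := w) δ ▸ closedBall_inscribedCenter_subset hw hp δ)
  set q := inscribedCenter p w δ
  set d := √(R ^ 2 - δ ^ 2) - δ * (⟪p, w⟫ + 1) / √(1 - ⟪p, w⟫ ^ 2)
  rcases lt_or_ge d 0 with hd | hd
  · -- the bound is then nonpositive, and the constant sequence at `q` is admissible
    have hq := hball (mem_closedBall_self hδ.le)
    refine ⟨_, _, q, q, fun _ => q, fun _ => q, hne₁, hcl₁, hcv₁, hsm₁, hne₂, hcl₂, hcv₂, hsm₂,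
      hball, by simp; linarith, rfl, fun k _ => ⟨hq.1, by simp, hq.2, by simp⟩, ?_⟩
    exact (mul_nonpos_of_nonneg_of_nonpos (by positivity) hd.le).trans infDist_nonneg
  · refine ⟨_, _, q, d • p, fun k => (d * ⟪p, w⟫ ^ (2 * k)) • p, zigzag p w d, hne₁, hcl₁, hcv₁,
      hsm₁, hne₂, hcl₂, hcv₂, hsm₂, hball, ?_, rfl, fun k _ => ?_, ?_⟩
    · have h := norm_smul_sub_inscribedCenter_sq hp hw (by nlinarith) (√(R ^ 2 - δ ^ 2)) δ
      rw [Real.sq_sqrt (by nlinarith), sub_add_cancel] at h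
      exact ((sq_eq_sq₀ (norm_nonneg _) (by linarith)).1 h).le
    · obtain ⟨h₁, h₁'⟩ := isNearestPoint_zigzag hp hc₀.le hd k
      obtain ⟨h₂, h₂'⟩ := isNearestPoint_zigzag_succ hw hc₀.le hd k
      exact ⟨h₁, h₁', h₂, h₂'⟩
    · obtain ⟨M, rfl⟩ := Nat.exists_eq_add_of_le' hN
      rw [show 2 * (M + 1) - 1 = 2 * M + 1 by omega, mul_comm]
      exact le_infDist_smul hw hc₀.le hc₁ _

/-- Lower bound for alternating projections: there is a hard instance of two `β`-smooth
closed convex sets in the plane, with a common `δ`-interior point `q` and initial point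
`x₀` within distance `R` of `q`, on which `N` steps of alternating projections leave a
final iterate at distance at least `c^(2N-1) (√(R² - δ²) - δ(c+1)/√(1-c²))` from the
intersection. -/
theorem alternating_projections_lower_bound (N : ℕ) (hN : 1 ≤ N) (β δ R c : ℝ)
    (hβ : 0 < β) (hδ : 0 < δ) (hR : δ ≤ R) (hc : c ∈ Set.Ioo (0 : ℝ) 1) :
    ∃ C₁ C₂ : Set (EuclideanSpace ℝ (Fin 2)), ∃ q x₀ : EuclideanSpace ℝ (Fin 2),
      ∃ z x : ℕ → EuclideanSpace ℝ (Fin 2),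
      C₁.Nonempty ∧ IsClosed C₁ ∧ Convex ℝ C₁ ∧ IsSmoothSet β C₁ ∧
      C₂.Nonempty ∧ IsClosed C₂ ∧ Convex ℝ C₂ ∧ IsSmoothSet β C₂ ∧
      closedBall q δ ⊆ C₁ ∩ C₂ ∧ ‖x₀ - q‖ ≤ R ∧ x 0 = x₀ ∧
      (∀ k < N, z k ∈ C₁ ∧ (∀ y ∈ C₁, ‖x k - z k‖ ≤ ‖x k - y‖) ∧
        x (k + 1) ∈ C₂ ∧ (∀ y ∈ C₂, ‖z k - x (k + 1)‖ ≤ ‖z k - y‖)) ∧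
      c ^ (2 * N - 1) * (Real.sqrt (R ^ 2 - δ ^ 2) - δ * (c + 1) / Real.sqrt (1 - c ^ 2)) ≤
        Metric.infDist (x N) (C₁ ∩ C₂) :=
  alternating_projections_lower_bound_general N hN β δ R c hδ hR hc
end
end
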